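/- Let P, Q, B, M, w, t ∈ ℤ>0 with M ≥ tQ. If the SLG Random Access problem with parameters n = Q·B^P, g = 5PQB, and σ = 2 has (M, w, t)-certificates, then the BLSD problem with parameters N = PQ and B has (M, w, tQ)-certificates. -/
import Mathlib


open scoped BigOperators

/-- Symbols of a grammar with `nv` variables and terminal alphabet `α`:
variables are `Sum.inl`, terminals are `Sum.inr`. -/
abbrev GSym (nv : ℕ) (α : Type) : Type := Sum (Fin nv) α

open Classical in
/-- The number of runs (maximal blocks of equal consecutive entries) of a list,
i.e. the length `|rle(X)|` of its run-length encoding. -/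
noncomputable def numRuns {β : Type} : List β → ℕ
  | [] => 0
  | [_] => 1
  | a :: b :: l => (if a = b then 0 else 1) + numRuns (b :: l)

/-- A weighted straight-line grammar (SLG) with variables `Fin nv` and terminal
alphabet `α`.  The same structure is used for run-length straight-line grammars
(RLSLGs), which differ from SLGs only in how their size is measured
(`sizeRLE` instead of `size`).  The field `rank` witnesses the existence of a
strict linear order `≺` on the variables with `B ≺ A` whenever `B` occurs in
`rhs A`. -/
structure WSLG (nv : ℕ) (α : Type) where
  rhs : Fin nv → List (GSym nv α)
  start : GSym nv α
  wt : α → ℕ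
  wt_pos : ∀ a, 1 ≤ wt a
  rank : Fin nv → ℕ
  rank_lt : ∀ A B, Sum.inl B ∈ rhs A → rank B < rank A

namespace WSLG

variable {nv nv' : ℕ} {α : Type}

/-- Fuel-based expansion; the fuel is always sufficient thanks to `rank_lt`. -/
def expandFuel (G : WSLG nv α) : ℕ → GSym nv α → List α
  | _, Sum.inr a => [a]
  | 0, Sum.inl _ => []
  | n + 1, Sum.inl A => ((G.rhs A).map (G.expandFuel n)).flatten

/-- The expansion `exp(s)` of a symbol `s`. -/
def exp (G : WSLG nv α) : GSym nv α → List α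
  | Sum.inr a => [a]
  | Sum.inl A => G.expandFuel (G.rank A + 1) (Sum.inl A)

/-- The expansion of a sequence of symbols. -/
def expSeq (G : WSLG nv α) (xs : List (GSym nv α)) : List α :=
  (xs.map G.exp).flatten

/-- The weight `⟨s⟩` of a symbol: total weight of the characters of its expansion. -/
def wtSym (G : WSLG nv α) (s : GSym nv α) : ℕ :=
  ((G.exp s).map G.wt).sum

/-- The weight of a sequence of symbols. -/
def wtSeq (G : WSLG nv α) (xs : List (GSym nv α)) : ℕ :=
  ((G.expSeq xs).map G.wt).sum

/-- The size `|G|` of an SLG: total length of all right-hand sides. -/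
def size (G : WSLG nv α) : ℕ := ∑ A, (G.rhs A).length

/-- The size `|G|` of an RLSLG: total run-length-encoded size of all
right-hand sides. -/
noncomputable def sizeRLE (G : WSLG nv α) : ℕ := ∑ A, numRuns (G.rhs A)

/-- A grammar is unweighted if every terminal has weight 1. -/
def Unweighted (G : WSLG nv α) : Prop := ∀ a, G.wt a = 1

/-- `f` is a grammar homomorphism from `G` to `H`:
`exp_G(A) = exp_H(f A)` for every variable `A` of `G`. -/
def IsHom (G : WSLG nv α) (H : WSLG nv' α) (f : Fin nv → Fin nv') : Prop :=
  ∀ A, G.exp (Sum.inl A) = H.exp (Sum.inl (f A))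

/-- Normal form for RLSLGs: every right-hand side is either a pair of exactly
two symbols or a power `s^k` of a single symbol with `k > 2`. -/
def NormalForm (G : WSLG nv α) : Prop :=
  ∀ A, (∃ s t : GSym nv α, G.rhs A = [s, t]) ∨
       (∃ (s : GSym nv α) (k : ℕ), 2 < k ∧ G.rhs A = List.replicate k s)

/-- A grammar is contracting if no variable has a heavy variable child, i.e.
every variable child `B` of `A` satisfies `⟨B⟩ ≤ ⟨A⟩/2`. -/
def Contracting (G : WSLG nv α) : Prop :=
  ∀ A : Fin nv, ∀ B : Fin nv, Sum.inl B ∈ G.rhs A →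
    2 * G.wtSym (Sum.inl B) ≤ G.wtSym (Sum.inl A)

/-- A variable `A` is `τ`-nice (w.r.t. the constant `d`):
(1) every variable child `B` satisfies `⟨B⟩ ≤ ⟨A⟩/τ`;
(2) `|rle(rhs A)| ≤ 2dτ`;
(3) every contiguous substring `X` of `rhs A` with `⟨X⟩ ≤ ⟨A⟩/τ` satisfies
`|rle(X)| ≤ 2d⌈log₂ τ⌉`. -/
def NiceVar (G : WSLG nv α) (d : ℕ) (τ : ℝ) (A : Fin nv) : Prop :=
  (∀ B : Fin nv, Sum.inl B ∈ G.rhs A →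
      (G.wtSym (Sum.inl B) : ℝ) ≤ (G.wtSym (Sum.inl A) : ℝ) / τ) ∧
  ((numRuns (G.rhs A) : ℝ) ≤ 2 * d * τ) ∧
  (∀ X : List (GSym nv α), X <:+: G.rhs A →
      (G.wtSeq X : ℝ) ≤ (G.wtSym (Sum.inl A) : ℝ) / τ →
      (numRuns X : ℝ) ≤ 2 * d * (⌈Real.logb 2 τ⌉ : ℝ))

/-- A grammar is `(τr, τv)`-nice (w.r.t. `d`) if its start symbol is `τr`-nice
and all its other variables are `τv`-nice. -/
def Nice (G : WSLG nv α) (d : ℕ) (τr τv : ℝ) : Prop :=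
  (∀ A : Fin nv, Sum.inl A = G.start → G.NiceVar d τr A) ∧
  (∀ A : Fin nv, Sum.inl A ≠ G.start → G.NiceVar d τv A)

/-- Parent–child step in the parse tree: from the node `(A, a)` to its `i`-th
child `(B_i, a + ⟨B_0 ⋯ B_{i-1}⟩)` where `rhs A = B_0 ⋯ B_{k-1}`. -/
def PTStep (G : WSLG nv α) (p q : GSym nv α × ℕ) : Prop :=
  ∃ (A : Fin nv) (i : ℕ) (h : i < (G.rhs A).length),
    p.1 = Sum.inl A ∧
    q = ((G.rhs A).get ⟨i, h⟩, p.2 + G.wtSeq ((G.rhs A).take i))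

/-- `PTNode G ℓ v` states that `v` is a node of the parse tree `P_G` whose
path from the root `(start, 0)` has `ℓ` edges. -/
inductive PTNode (G : WSLG nv α) : ℕ → GSym nv α × ℕ → Prop
  | root : PTNode G 0 (G.start, 0)
  | step {n : ℕ} {p q : GSym nv α × ℕ} :
      PTNode G n p → PTStep G p q → PTNode G (n + 1) q

/-- Fuel-based height; the fuel is always sufficient thanks to `rank_lt`. -/
def heightFuel (G : WSLG nv α) : ℕ → GSym nv α → ℕ
  | _, Sum.inr _ => 0
  | 0, Sum.inl _ => 0
  | n + 1, Sum.inl A => 1 + ((G.rhs A).map (G.heightFuel n)).foldr max 0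

/-- The height of a symbol: `h(a) = 0` for terminals and
`h(A) = 1 + max_i h(B_i)` for a variable with `rhs A = B_0 ⋯ B_{k-1}`. -/
def heightSym (G : WSLG nv α) : GSym nv α → ℕ
  | Sum.inr _ => 0
  | Sum.inl A => G.heightFuel (G.rank A + 1) (Sum.inl A)

/-- A leaf variable (for parameter `b`): its right-hand side consists of
terminals only and has length in `[b .. 2b)`. -/
def IsLeafVar (G : WSLG nv α) (b : ℕ) (A : Fin nv) : Prop :=
  (∀ s ∈ G.rhs A, ∃ a : α, s = Sum.inr a) ∧
  b ≤ (G.rhs A).length ∧ (G.rhs A).length < 2 * b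

/-- A top variable: its right-hand side contains only variables. -/
def IsTopVar (G : WSLG nv α) (A : Fin nv) : Prop :=
  ∀ s ∈ G.rhs A, ∃ B : Fin nv, s = Sum.inl B

/-- A grammar is `b`-leafy if every variable is a leaf variable or a top
variable. -/
def BLeafy (G : WSLG nv α) (b : ℕ) : Prop :=
  ∀ A, G.IsLeafVar b A ∨ G.IsTopVar A

open Classical in
/-- The size `|Top(G)|` of the top part of a (b-leafy) RLSLG: total
run-length-encoded size of the right-hand sides of the top variables. -/
noncomputable def topSizeRLE (G : WSLG nv α) : ℕ :=
  ∑ A, if G.IsTopVar A then numRuns (G.rhs A) else 0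

open Classical in
/-- The number of leaf variables of a (b-leafy) grammar. -/
noncomputable def numLeafVars (G : WSLG nv α) (b : ℕ) : ℕ :=
  (Finset.univ.filter fun A => G.IsLeafVar b A).card

/-- For an unweighted `b`-leafy grammar `G`, the variable `A` (a top variable)
is `τ`-nice as a variable of the top part `Top(G)`: in `Top(G)`, the variables
are the top variables of `G`, the terminals are the leaf variables of `G`, and
the weight of a symbol is the length of its `G`-expansion. -/
def NiceTopVar (G : WSLG nv α) (d : ℕ) (τ : ℝ) (A : Fin nv) : Prop :=
  (∀ B : Fin nv, Sum.inl B ∈ G.rhs A → G.IsTopVar B →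
      ((G.exp (Sum.inl B)).length : ℝ) ≤ ((G.exp (Sum.inl A)).length : ℝ) / τ) ∧
  ((numRuns (G.rhs A) : ℝ) ≤ 2 * d * τ) ∧
  (∀ X : List (GSym nv α), X <:+: G.rhs A →
      ((G.expSeq X).length : ℝ) ≤ ((G.exp (Sum.inl A)).length : ℝ) / τ →
      (numRuns X : ℝ) ≤ 2 * d * (⌈Real.logb 2 τ⌉ : ℝ))

/-- The top part `Top(G)` of an unweighted `b`-leafy grammar `G` is
`(τr, τv)`-nice (w.r.t. `d`): the start symbol, if it is a top variable, is
`τr`-nice in `Top(G)`, and all other top variables are `τv`-nice in `Top(G)`. -/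
def TopNice (G : WSLG nv α) (d : ℕ) (τr τv : ℝ) : Prop :=
  (∀ A : Fin nv, G.IsTopVar A → Sum.inl A = G.start → G.NiceTopVar d τr A) ∧
  (∀ A : Fin nv, G.IsTopVar A → Sum.inl A ≠ G.start → G.NiceTopVar d τv A)

end WSLG

/-- A data-structure problem `f : X × Y → Z` has `(M, w, t)`-certificates. -/
def HasCertificates {X Y Z : Type*} (f : X → Y → Z) (M w t : ℕ) : Prop :=
  ∃ D : Y → Fin M → (Fin w → Bool),
    ∀ x y, ∃ C : Finset (Fin M), C.card = t ∧
      ∀ y', (∀ i ∈ C, D y i = D y' i) → f x y' = f x y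

/-- An input of the SLG Random Access problem with parameters `(n, g, σ)`:
an unweighted SLG of size at most `g` producing a string `T ∈ [0..σ)^n`. -/
structure RAInput (n g σ : ℕ) where
  nv : ℕ
  G : WSLG nv (Fin σ)
  unweighted : G.Unweighted
  size_le : G.size ≤ g
  len_eq : (G.exp G.start).length = n

/-- The SLG Random Access problem: given a position `i ∈ [0..n)` and an input
producing `T`, return `T[i]`. -/
def RAProblem (n g σ : ℕ) (x : Fin n) (y : RAInput n g σ) : Fin σ :=
  (y.G.exp y.G.start).get (Fin.cast y.len_eq.symm x)

/-- The Blocked Lopsided Set Disjointness (BLSD) problem with parameters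
`N, B`: queries are `S : [N] → [B]`, inputs are `T : [N] → 2^[B]`, and the
answer is whether there exists `i` with `S i ∈ T i`. -/
def BLSDProblem (N B : ℕ) (S : Fin N → Fin B) (T : Fin N → Finset (Fin B)) : Prop :=
  ∃ i, S i ∈ T i

/-- The index `qP + p ∈ [PQ]` of the `p`-th block inside the `q`-th part. -/
def blockIdx {P Q : ℕ} (q : Fin Q) (p : Fin P) : Fin (P * Q) :=
  ⟨(q : ℕ) * P + (p : ℕ), by
    have hq := q.isLt
    have hp := p.isLt
    have h1 : (q : ℕ) * P + (p : ℕ) < ((q : ℕ) + 1) * P := by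
      rw [Nat.add_mul, Nat.one_mul]; omega
    have h2 : ((q : ℕ) + 1) * P ≤ Q * P := Nat.mul_le_mul_right P hq
    have h3 : Q * P = P * Q := Nat.mul_comm Q P
    omega⟩
namespace WSLG

variable {nv : ℕ} {α : Type}

lemma expandFuel_inr (G : WSLG nv α) (n : ℕ) (a : α) :
    G.expandFuel n (Sum.inr a) = [a] := by cases n <;> rfl

lemma expandFuel_fuel_congr (G : WSLG nv α) :
    ∀ (k n m : ℕ) (A : Fin nv), G.rank A ≤ k → G.rank A < n → G.rank A < m →
      G.expandFuel n (Sum.inl A) = G.expandFuel m (Sum.inl A) := by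
  intro k
  induction k with
  | zero =>
    intro n m A hk hn hm
    obtain ⟨n, rfl⟩ := Nat.exists_eq_succ_of_ne_zero (by omega : n ≠ 0)
    obtain ⟨m, rfl⟩ := Nat.exists_eq_succ_of_ne_zero (by omega : m ≠ 0)
    simp only [expandFuel]
    congr 1
    apply List.map_congr_left
    intro s hs
    cases s with
    | inr a => simp [expandFuel_inr]
    | inl Bv => exact absurd (G.rank_lt A Bv hs) (by omega)
  | succ k ih =>
    intro n m A hk hn hm
    obtain ⟨n, rfl⟩ := Nat.exists_eq_succ_of_ne_zero (by omega : n ≠ 0)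
    obtain ⟨m, rfl⟩ := Nat.exists_eq_succ_of_ne_zero (by omega : m ≠ 0)
    simp only [expandFuel]
    congr 1
    apply List.map_congr_left
    intro s hs
    cases s with
    | inr a => simp [expandFuel_inr]
    | inl Bv =>
      have hlt := G.rank_lt A Bv hs
      exact ih n m Bv (by omega) (by omega) (by omega)

lemma exp_inl (G : WSLG nv α) (A : Fin nv) :
    G.exp (Sum.inl A) = G.expSeq (G.rhs A) := by
  show G.expandFuel (G.rank A + 1) (Sum.inl A) = _
  simp only [expandFuel, expSeq]
  congr 1
  apply List.map_congr_left
  intro s hs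
  cases s with
  | inr a => simp [expandFuel_inr, exp]
  | inl Bv =>
    have hlt := G.rank_lt A Bv hs
    exact expandFuel_fuel_congr G (G.rank Bv) _ _ Bv le_rfl (by omega) (by omega)

end WSLG

-- list helpers
lemma flatten_replicate_replicate {β : Type*} (n m : ℕ) (a : β) :
    (List.replicate n (List.replicate m a)).flatten = List.replicate (n * m) a := by
  induction n with
  | zero => simp
  | succ n ih =>
    rw [List.replicate_succ, List.flatten_cons, ih, Nat.succ_mul, Nat.add_comm,
      List.replicate_add]

lemma getElem?_flatten_const {β : Type*} (L : ℕ) :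
    ∀ (l : List (List β)), (∀ x ∈ l, x.length = L) →
      ∀ (c r : ℕ) (hc : c < l.length), r < L →
        l.flatten[c * L + r]? = (l[c]'hc)[r]? := by
  intro l
  induction l with
  | nil => intro h c r hc; simp at hc
  | cons x xs ih =>
    intro h c r hc hr
    cases c with
    | zero =>
      have hx : x.length = L := h x (by simp)
      simp only [List.flatten_cons, Nat.zero_mul, Nat.zero_add]
      rw [List.getElem?_append_left (by omega)]
      rfl
    | succ c =>
      have hx : x.length = L := h x (by simp)
      have : (c + 1) * L + r = x.length + (c * L + r) := by rw [hx]; ring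
      rw [List.flatten_cons, this, List.getElem?_append_right (by omega)]
      simp only [Nat.add_sub_cancel_left]
      rw [ih (fun y hy => h y (by simp [hy])) c r (by simpa using hc) hr]
      rfl
section Construction

variable {P Q B : ℕ}

/-- Variable names of the grammar: `O_p` variables, `X_{q,p}` variables, root. -/
abbrev Vt (P Q : ℕ) : Type := Fin P ⊕ (Fin Q × Fin (P + 1)) ⊕ Unit

/-- Total version of `T` indexed by part/block coordinates. -/
def Tset (T : Fin (P * Q) → Finset (Fin B)) (q : Fin Q) (p : ℕ) : Finset (Fin B) :=
  if h : p < P then T (blockIdx q ⟨p, h⟩) else ∅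

/-- Right-hand sides of the grammar for `T`, on the abstract variable names. -/
def spec (T : Fin (P * Q) → Finset (Fin B)) : Vt P Q → List (Vt P Q ⊕ Fin 2)
  | Sum.inl p =>
      if h : (p : ℕ) = 0 then [Sum.inr 1]
      else List.replicate B (Sum.inl (Sum.inl ⟨(p : ℕ) - 1, by omega⟩))
  | Sum.inr (Sum.inl (q, p)) =>
      if h : (p : ℕ) = 0 then [Sum.inr 0]
      else (List.finRange B).map (fun c =>
        if c ∈ Tset T q ((p : ℕ) - 1) then
          Sum.inl (Sum.inl ⟨(p : ℕ) - 1, by have := p.isLt; omega⟩)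
        else
          Sum.inl (Sum.inr (Sum.inl (q, ⟨(p : ℕ) - 1, by have := p.isLt; omega⟩))))
  | Sum.inr (Sum.inr _) =>
      (List.finRange Q).map (fun q =>
        Sum.inl (Sum.inr (Sum.inl (q, ⟨P, Nat.lt_succ_self P⟩))))

/-- Rank of the abstract variables. -/
def rkV : Vt P Q → ℕ
  | Sum.inl p => (p : ℕ)
  | Sum.inr (Sum.inl (_, p)) => (p : ℕ)
  | Sum.inr (Sum.inr _) => P + 1

lemma rkV_spec (T : Fin (P * Q) → Finset (Fin B)) :
    ∀ v w : Vt P Q, Sum.inl w ∈ spec T v → rkV w < rkV v := by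
  rintro (p | ⟨⟨q, p⟩⟩ | u) w hw
  · rw [spec] at hw
    split at hw
    · simp at hw
    · obtain rfl : w = _ := by simpa using List.eq_of_mem_replicate hw
      simp only [rkV]; omega
  · rw [spec] at hw
    split at hw
    · simp at hw
    · simp only [List.mem_map, List.mem_finRange, true_and] at hw
      obtain ⟨c, hc⟩ := hw
      split at hc <;> · cases hc; simp only [rkV]; omega
  · rw [spec] at hw
    simp only [List.mem_map, List.mem_finRange, true_and] at hw
    obtain ⟨c, hc⟩ := hw
    cases hc; simp only [rkV]; omega

noncomputable def eV (P Q : ℕ) : Vt P Q ≃ Fin (Fintype.card (Vt P Q)) := Fintype.equivFin _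

/-- The grammar for input `T`. -/
noncomputable def gram (T : Fin (P * Q) → Finset (Fin B)) :
    WSLG (Fintype.card (Vt P Q)) (Fin 2) where
  rhs i := (spec T ((eV P Q).symm i)).map (Sum.map (eV P Q) id)
  start := Sum.inl (eV P Q (Sum.inr (Sum.inr ())))
  wt _ := 1
  wt_pos _ := le_rfl
  rank i := rkV ((eV P Q).symm i)
  rank_lt A C h := by
    simp only [List.mem_map] at h
    obtain ⟨s, hs, heq⟩ := h
    match s with
    | Sum.inl w =>
      simp only [Sum.map_inl, Sum.inl.injEq] at heq
      subst heq
      simp only [Equiv.symm_apply_apply]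
      exact rkV_spec T _ _ hs
    | Sum.inr a => simp at heq

end Construction
section Strings

variable {P Q B : ℕ}

/-- Intended expansion of `X_{q,p}`. -/
def xstr (T : Fin (P * Q) → Finset (Fin B)) (q : Fin Q) : ℕ → List (Fin 2)
  | 0 => [0]
  | p + 1 =>
      ((List.finRange B).map fun c =>
        if c ∈ Tset T q p then List.replicate (B ^ p) (1 : Fin 2) else xstr T q p).flatten

/-- Intended expansion of every variable. -/
def tgt (T : Fin (P * Q) → Finset (Fin B)) : Vt P Q → List (Fin 2)
  | Sum.inl p => List.replicate (B ^ (p : ℕ)) 1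
  | Sum.inr (Sum.inl (q, p)) => xstr T q (p : ℕ)
  | Sum.inr (Sum.inr _) => ((List.finRange Q).map fun q => xstr T q P).flatten

lemma length_xstr (T : Fin (P * Q) → Finset (Fin B)) (q : Fin Q) (p : ℕ) :
    (xstr T q p).length = B ^ p := by
  induction p with
  | zero => simp [xstr]
  | succ p ih =>
    rw [xstr, List.length_flatten, List.map_map]
    have : ((List.finRange B).map
        ((List.length) ∘ fun c =>
          if c ∈ Tset T q p then List.replicate (B ^ p) (1 : Fin 2) else xstr T q p))
        = (List.finRange B).map (fun _ => B ^ p) := by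
      apply List.map_congr_left
      intro c _
      by_cases hc : c ∈ Tset T q p <;> simp [hc, ih]
    rw [this, List.map_const', List.sum_replicate, List.length_finRange, smul_eq_mul,
      pow_succ, Nat.mul_comm]

lemma exp_gram_aux (T : Fin (P * Q) → Finset (Fin B)) :
    ∀ (k : ℕ) (v : Vt P Q), rkV v < k →
      (gram T).exp (Sum.inl (eV P Q v)) = tgt T v := by
  intro k
  induction k with
  | zero => intro v hv; exact absurd hv (Nat.not_lt_zero _)
  | succ k ih =>
    intro v hv
    rw [WSLG.exp_inl]
    have hrhs : (gram T).rhs (eV P Q v) = (spec T v).map (Sum.map (eV P Q) id) := by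
      simp [gram]
    rw [hrhs, WSLG.expSeq, List.map_map]
    have hmap : (spec T v).map ((gram T).exp ∘ Sum.map (eV P Q) id)
        = (spec T v).map (fun s => Sum.elim (tgt T) (fun a => [a]) s) := by
      apply List.map_congr_left
      intro s hs
      match s with
      | Sum.inl w =>
        have hw : rkV w < rkV v := rkV_spec T v w hs
        simp only [Function.comp_apply, Sum.map_inl, Sum.elim_inl, id]
        exact ih w (by omega)
      | Sum.inr a => rfl
    rw [hmap]
    rcases v with p | ⟨⟨q, p⟩⟩ | u
    · rw [spec]
      by_cases hp : (p : ℕ) = 0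
      · simp [hp, tgt]
      · rw [dif_neg hp]
        simp only [List.map_replicate, Sum.elim_inl, tgt]
        rw [flatten_replicate_replicate]
        congr 1
        conv_rhs => rw [show (p : ℕ) = ((p : ℕ) - 1) + 1 from by omega]
        rw [pow_succ, Nat.mul_comm]
    · rw [spec]
      by_cases hp : (p : ℕ) = 0
      · simp [hp, tgt, xstr]
      · obtain ⟨p', hp'⟩ : ∃ p', (p : ℕ) = p' + 1 := ⟨(p : ℕ) - 1, by omega⟩
        rw [dif_neg hp, tgt]
        simp only [show (p : ℕ) - 1 = p' from by omega]
        conv_rhs => rw [hp']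
        rw [xstr, List.map_map]
        congr 1
        apply List.map_congr_left
        intro c _
        by_cases hc : c ∈ Tset T q p' <;> simp [hc, Function.comp, tgt]
    · rw [spec, tgt, List.map_map]
      rfl

lemma exp_gram (T : Fin (P * Q) → Finset (Fin B)) (v : Vt P Q) :
    (gram T).exp (Sum.inl (eV P Q v)) = tgt T v :=
  exp_gram_aux T (rkV v + 1) v (Nat.lt_succ_self _)

lemma exp_gram_start (T : Fin (P * Q) → Finset (Fin B)) :
    (gram T).exp (gram T).start
      = ((List.finRange Q).map fun q => xstr T q P).flatten := by
  have := exp_gram T (Sum.inr (Sum.inr ()) : Vt P Q)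
  exact this

lemma length_exp_start (T : Fin (P * Q) → Finset (Fin B)) :
    ((gram T).exp (gram T).start).length = Q * B ^ P := by
  rw [exp_gram_start, List.length_flatten, List.map_map]
  have : ((List.finRange Q).map (List.length ∘ fun q => xstr T q P))
      = (List.finRange Q).map (fun _ => B ^ P) := by
    apply List.map_congr_left
    intro q _
    simp [length_xstr]
  rw [this, List.map_const', List.sum_replicate, List.length_finRange, smul_eq_mul]

end Strings
section GetAndSize

variable {P Q B : ℕ}

/-- Total version of the query `S`. -/
def Sfin (S : Fin (P * Q) → Fin B) (hB : 0 < B) (q : Fin Q) (p : ℕ) : Fin B :=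
  if h : p < P then S (blockIdx q ⟨p, h⟩) else ⟨0, hB⟩

/-- The position queried inside `X_{q,p}`. -/
def qpos (S : Fin (P * Q) → Fin B) (hB : 0 < B) (q : Fin Q) : ℕ → ℕ
  | 0 => 0
  | p + 1 => (Sfin S hB q p : ℕ) * B ^ p + qpos S hB q p

lemma qpos_lt (S : Fin (P * Q) → Fin B) (hB : 0 < B) (q : Fin Q) (p : ℕ) :
    qpos S hB q p < B ^ p := by
  induction p with
  | zero => simp [qpos]
  | succ p ih =>
    rw [qpos]
    have h1 : (Sfin S hB q p : ℕ) + 1 ≤ B := (Sfin S hB q p).isLt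
    calc (Sfin S hB q p : ℕ) * B ^ p + qpos S hB q p
        < ((Sfin S hB q p : ℕ) + 1) * B ^ p := by rw [Nat.add_mul, Nat.one_mul]; omega
      _ ≤ B * B ^ p := Nat.mul_le_mul_right _ h1
      _ = B ^ (p + 1) := by rw [pow_succ, Nat.mul_comm]

open Classical in
lemma getElem?_xstr (T : Fin (P * Q) → Finset (Fin B)) (S : Fin (P * Q) → Fin B)
    (hB : 0 < B) (q : Fin Q) (p : ℕ) :
    (xstr T q p)[qpos S hB q p]? =
      some (if ∃ j, j < p ∧ Sfin S hB q j ∈ Tset T q j then 1 else 0) := by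
  induction p with
  | zero =>
    have h0 : ¬ ∃ j, j < 0 ∧ Sfin S hB q j ∈ Tset T q j := by
      rintro ⟨j, hj, -⟩; omega
    rw [if_neg h0]
    rfl
  | succ p ih =>
    rw [xstr, qpos]
    have hlen : ∀ x ∈ (List.finRange B).map fun c =>
        if c ∈ Tset T q p then List.replicate (B ^ p) (1 : Fin 2) else xstr T q p,
        x.length = B ^ p := by
      intro x hx
      simp only [List.mem_map, List.mem_finRange, true_and] at hx
      obtain ⟨c, rfl⟩ := hx
      by_cases hc : c ∈ Tset T q p <;> simp [hc, length_xstr]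
    have hc : (Sfin S hB q p : ℕ) < (((List.finRange B).map fun c =>
        if c ∈ Tset T q p then List.replicate (B ^ p) (1 : Fin 2) else xstr T q p)).length := by
      simpa using (Sfin S hB q p).isLt
    rw [getElem?_flatten_const (B ^ p) _ hlen _ _ hc (qpos_lt S hB q p)]
    rw [List.getElem_map, List.getElem_finRange]
    simp only [Fin.cast_mk, Fin.eta]
    by_cases hmem : Sfin S hB q p ∈ Tset T q p
    · rw [if_pos hmem, List.getElem?_replicate, if_pos (qpos_lt S hB q p),
        if_pos ⟨p, Nat.lt_succ_self p, hmem⟩]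
    · rw [if_neg hmem, ih]
      congr 1
      apply if_congr _ rfl rfl
      constructor
      · rintro ⟨j, hj, hjm⟩; exact ⟨j, by omega, hjm⟩
      · rintro ⟨j, hj, hjm⟩
        refine ⟨j, ?_, hjm⟩
        rcases Nat.lt_succ_iff_lt_or_eq.mp hj with h | rfl
        · exact h
        · exact absurd hjm hmem

open Classical in
lemma getElem?_full (T : Fin (P * Q) → Finset (Fin B)) (S : Fin (P * Q) → Fin B)
    (hB : 0 < B) (q : Fin Q) :
    ((gram T).exp (gram T).start)[(q : ℕ) * B ^ P + qpos S hB q P]? =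
      some (if ∃ j, j < P ∧ Sfin S hB q j ∈ Tset T q j then 1 else 0) := by
  rw [exp_gram_start]
  have hlen : ∀ x ∈ (List.finRange Q).map fun q => xstr T q P, x.length = B ^ P := by
    intro x hx
    simp only [List.mem_map, List.mem_finRange, true_and] at hx
    obtain ⟨c, rfl⟩ := hx
    simp [length_xstr]
  have hc : (q : ℕ) < (((List.finRange Q).map fun q => xstr T q P)).length := by
    simpa using q.isLt
  rw [getElem?_flatten_const (B ^ P) _ hlen _ _ hc (qpos_lt S hB q P)]
  rw [List.getElem_map, List.getElem_finRange]
  simp only [Fin.cast_mk, Fin.eta]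
  rw [getElem?_xstr]

lemma size_gram (T : Fin (P * Q) → Finset (Fin B)) (hB : 0 < B) :
    (gram T).size ≤ P * B + Q * (P + 1) * B + Q := by
  have hsum : (gram T).size = ∑ v : Vt P Q, (spec T v).length := by
    rw [WSLG.size]
    refine Fintype.sum_equiv (eV P Q).symm _ _ ?_
    intro i
    simp [gram]
  rw [hsum]
  have hbound : ∀ v : Vt P Q,
      (spec T v).length ≤ Sum.elim (fun _ => B) (Sum.elim (fun _ => B) (fun _ => Q)) v := by
    rintro (p | ⟨⟨q', p⟩⟩ | u)
    · rw [spec]; split <;> simp <;> omega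
    · rw [spec]; split <;> simp <;> omega
    · rw [spec]; simp
  calc ∑ v : Vt P Q, (spec T v).length
      ≤ ∑ v : Vt P Q, Sum.elim (fun _ => B) (Sum.elim (fun _ => B) (fun _ => Q)) v :=
        Finset.sum_le_sum fun v _ => hbound v
    _ = P * B + Q * (P + 1) * B + Q := by
        simp [Fintype.sum_sum_type, Finset.sum_const, Finset.card_univ, Fintype.card_prod,
          mul_comm, mul_assoc, mul_left_comm, add_assoc]

/-- The RA input corresponding to a BLSD input. -/
noncomputable def raInput (hP : 0 < P) (hQ : 0 < Q) (hB : 0 < B)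
    (T : Fin (P * Q) → Finset (Fin B)) : RAInput (Q * B ^ P) (5 * P * Q * B) 2 where
  nv := Fintype.card (Vt P Q)
  G := gram T
  unweighted := fun _ => rfl
  size_le := by
    refine (size_gram T hB).trans ?_
    have hpb : 1 * 1 ≤ P * B := Nat.mul_le_mul hP hB
    have h1 : 1 * (P * B) ≤ Q * (P * B) := Nat.mul_le_mul_right _ hQ
    have h3 : 1 * (Q * B) ≤ P * (Q * B) := Nat.mul_le_mul_right _ hP
    have h4 : 1 * Q ≤ (P * B) * Q := Nat.mul_le_mul_right _ (by simpa using hpb)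
    nlinarith [h1, h3, h4]
  len_eq := length_exp_start T

end GetAndSize
section Assembly

variable {P Q B : ℕ}

/-- The RA query corresponding to part `q` of the BLSD query `S`. -/
def qIdx (S : Fin (P * Q) → Fin B) (hB : 0 < B) (q : Fin Q) : Fin (Q * B ^ P) :=
  ⟨(q : ℕ) * B ^ P + qpos S hB q P, by
    have h1 := qpos_lt S hB q P
    have h2 : (q : ℕ) + 1 ≤ Q := q.isLt
    calc (q : ℕ) * B ^ P + qpos S hB q P
        < ((q : ℕ) + 1) * B ^ P := by rw [Nat.add_mul, Nat.one_mul]; omega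
      _ ≤ Q * B ^ P := Nat.mul_le_mul_right _ h2⟩

open Classical in
lemma ra_value (hP : 0 < P) (hQ : 0 < Q) (hB : 0 < B)
    (T : Fin (P * Q) → Finset (Fin B)) (S : Fin (P * Q) → Fin B) (q : Fin Q) :
    RAProblem (Q * B ^ P) (5 * P * Q * B) 2 (qIdx S hB q) (raInput hP hQ hB T)
      = if ∃ j, j < P ∧ Sfin S hB q j ∈ Tset T q j then 1 else 0 := by
  have h := getElem?_full T S hB q
  have hlt : (q : ℕ) * B ^ P + qpos S hB q P < ((gram T).exp (gram T).start).length := by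
    rw [length_exp_start]
    exact (qIdx S hB q).isLt
  rw [List.getElem?_eq_getElem hlt] at h
  have h2 := Option.some.inj h
  rw [RAProblem]
  rw [List.get_eq_getElem]
  exact h2

open Classical in
lemma blsd_iff (hP : 0 < P) (hB : 0 < B)
    (S : Fin (P * Q) → Fin B) (T : Fin (P * Q) → Finset (Fin B)) :
    BLSDProblem (P * Q) B S T ↔
      ∃ q : Fin Q, ∃ j, j < P ∧ Sfin S hB q j ∈ Tset T q j := by
  constructor
  · rintro ⟨i, hi⟩
    have hdiv : (i : ℕ) / P < Q := by
      rw [Nat.div_lt_iff_lt_mul hP]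
      have h1 := i.isLt
      have h2 : P * Q = Q * P := Nat.mul_comm _ _
      omega
    refine ⟨⟨(i : ℕ) / P, hdiv⟩, (i : ℕ) % P, Nat.mod_lt _ hP, ?_⟩
    have hbi : blockIdx (⟨(i : ℕ) / P, hdiv⟩ : Fin Q) ⟨(i : ℕ) % P, Nat.mod_lt _ hP⟩ = i := by
      apply Fin.ext
      show (i : ℕ) / P * P + (i : ℕ) % P = (i : ℕ)
      rw [Nat.mul_comm]
      exact Nat.div_add_mod _ _
    rw [Sfin, Tset, dif_pos (Nat.mod_lt _ hP), dif_pos (Nat.mod_lt _ hP), hbi]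
    exact hi
  · rintro ⟨q, j, hj, hm⟩
    refine ⟨blockIdx q ⟨j, hj⟩, ?_⟩
    rw [Sfin, Tset, dif_pos hj, dif_pos hj] at hm
    exact hm

end Assembly


/-- If the SLG Random Access problem with parameters
`n = Q·B^P`, `g = 5PQB`, `σ = 2` has `(M, w, t)`-certificates and `M ≥ tQ`,
then BLSD with parameters `N = PQ` and `B` has `(M, w, tQ)`-certificates. -/
theorem ra_certificates_to_blsd (P Q B M w t : ℕ)
    (hP : 0 < P) (hQ : 0 < Q) (hB : 0 < B)
    (hM : 0 < M) (hw : 0 < w) (ht : 0 < t) (hMtQ : t * Q ≤ M)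
    (hRA : HasCertificates (RAProblem (Q * B ^ P) (5 * P * Q * B) 2) M w t) :
    HasCertificates (BLSDProblem (P * Q) B) M w (t * Q) := by
  classical
  obtain ⟨D, hD⟩ := hRA
  refine ⟨fun T => D (raInput hP hQ hB T), ?_⟩
  intro S T
  choose C hCcard hC using fun q : Fin Q => hD (qIdx S hB q) (raInput hP hQ hB T)
  have hcard0 : (Finset.univ.biUnion C).card ≤ t * Q := by
    refine le_trans Finset.card_biUnion_le ?_
    have : ∀ q ∈ (Finset.univ : Finset (Fin Q)), (C q).card = t := fun q _ => hCcard q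
    rw [Finset.sum_congr rfl this, Finset.sum_const, Finset.card_univ, Fintype.card_fin,
      smul_eq_mul, Nat.mul_comm]
  obtain ⟨Cbig, hsub, hcardbig⟩ :=
    Finset.exists_superset_card_eq hcard0 (by simpa using hMtQ)
  refine ⟨Cbig, hcardbig, ?_⟩
  intro T' hagree
  have hq : ∀ q : Fin Q,
      RAProblem (Q * B ^ P) (5 * P * Q * B) 2 (qIdx S hB q) (raInput hP hQ hB T')
        = RAProblem (Q * B ^ P) (5 * P * Q * B) 2 (qIdx S hB q) (raInput hP hQ hB T) := by
    intro q
    exact hC q (raInput hP hQ hB T')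
      (fun i hi => hagree i (hsub (Finset.mem_biUnion.mpr ⟨q, Finset.mem_univ q, hi⟩)))
  apply propext
  rw [blsd_iff hP hB S T', blsd_iff hP hB S T]
  refine exists_congr fun q => ?_
  have h := hq q
  rw [ra_value hP hQ hB T' S q, ra_value hP hQ hB T S q] at h
  by_cases hA' : ∃ j, j < P ∧ Sfin S hB q j ∈ Tset T' q j <;>
    by_cases hA : ∃ j, j < P ∧ Sfin S hB q j ∈ Tset T q j <;>
      simp [hA', hA] at h ⊢
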